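/- Fix an integer k ≥ 1. For each n ≥ 2 let x_n be an entrywise-positive eigenvector of the adjacency matrix of the complete split graph S(n, kn). Then c(x_n) tends to k·((√(4k+1) − 1)/k − 2)² / (√(4k+1) + 1)² as n → ∞. -/

import Mathlib

open scoped Classical
open Matrix Filter Topology

/-- The square of the coefficient of variation of a vector: `(σ/μ)²` where
`μ` is the mean and `σ²` the (population) variance of the entries. -/
noncomputable def cv2 {ι : Type*} [Fintype ι] (x : ι → ℝ) : ℝ :=
  ((∑ i, (x i - (∑ j, x j) / (Fintype.card ι : ℝ)) ^ 2) / (Fintype.card ι : ℝ)) /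
    ((∑ j, x j) / (Fintype.card ι : ℝ)) ^ 2

/-- The complete split graph `S(n,m) = K_{n+m} − K_m`: a clique of `n` vertices
(the left summand) completely joined to an independent set of `m` vertices
(the right summand). -/
def completeSplitGraph (n m : ℕ) : SimpleGraph (Fin n ⊕ Fin m) where
  Adj u v := u ≠ v ∧ (u.isLeft ∨ v.isLeft)
  symm := by
    constructor
    rintro u v ⟨h1, h2⟩
    exact ⟨h1.symm, h2.symm⟩
  loopless := by
    constructor
    rintro u ⟨h, -⟩
    exact h rfl

/-! A positive eigenvector of `S(n, m)` is constant on the clique, say `a`, and on the independent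
set, say `b`, and the two eigen-equations `λ b = n a`, `λ a = (n - 1) a + m b` eliminate `λ` to
`m b² + (n - 1) a b = n a²`. For `m = k n` the ratio `r = b / a` is therefore the positive root of
`k r² + (1 - 1/n) r = 1`, while `c(x) = k (1 - r)² / (1 + k r)²`; as `n → ∞` the root moves
continuously to that of `k r² + r = 1`, namely `r = (√(4k+1) - 1) / (2k)`. -/

-- No side condition: if `n + m = 0` or the mean vanishes, both sides are `0` since `x / 0 = 0`.
theorem cv2_sumElim_const (n m : ℕ) (a b : ℝ) :
    cv2 (Sum.elim (fun _ : Fin n => a) (fun _ : Fin m => b)) =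
      n * m * (a - b) ^ 2 / (n * a + m * b) ^ 2 := by
  simp only [cv2, Fintype.sum_sum_type, Sum.elim_inl, Sum.elim_inr, Finset.sum_const,
    Finset.card_univ, Fintype.card_fin, Fintype.card_sum, nsmul_eq_mul, Nat.cast_add]
  rcases Nat.eq_zero_or_pos (n + m) with hN | hN
  · obtain ⟨rfl, rfl⟩ := Nat.add_eq_zero_iff.mp hN
    simp
  have hN' : (n : ℝ) + m ≠ 0 := by exact_mod_cast hN.ne'
  rcases eq_or_ne ((n : ℝ) * a + m * b) 0 with hS | hS
  · simp [hS]
  field_simp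
  ring

-- The positive solution `r` of `K r² + c r = 1`, for `0 < K`.
noncomputable def positiveRoot (K c : ℝ) : ℝ := (Real.sqrt (c ^ 2 + 4 * K) - c) / (2 * K)

theorem continuous_positiveRoot (K : ℝ) : Continuous (positiveRoot K) := by
  unfold positiveRoot
  fun_prop

theorem positiveRoot_pos {K : ℝ} (hK : 0 < K) (c : ℝ) : 0 < positiveRoot K c := by
  have : c < Real.sqrt (c ^ 2 + 4 * K) := calc
    c ≤ |c| := le_abs_self c
    _ = Real.sqrt (c ^ 2) := (Real.sqrt_sq_eq_abs c).symm
    _ < Real.sqrt (c ^ 2 + 4 * K) := Real.sqrt_lt_sqrt (sq_nonneg c) (by linarith)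
  unfold positiveRoot
  exact div_pos (by linarith) (by positivity)

theorem eq_positiveRoot {K c r : ℝ} (hK : 0 < K) (hr : 0 < r) (h : K * r ^ 2 + c * r = 1) :
    r = positiveRoot K c := by
  have hlin : 0 < 2 * K * r + c := by nlinarith
  have hsq : c ^ 2 + 4 * K = (2 * K * r + c) ^ 2 := by linear_combination -4 * K * h
  rw [positiveRoot, hsq, Real.sqrt_sq hlin.le]
  field_simp
  ring

namespace completeSplitGraph

variable {n m : ℕ}

theorem neighborFinset_inl (i : Fin n) :
    (completeSplitGraph n m).neighborFinset (Sum.inl i) = Finset.univ.erase (Sum.inl i) := by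
  ext v
  rw [SimpleGraph.mem_neighborFinset]
  simp [completeSplitGraph, ne_comm]

theorem neighborFinset_inr (j : Fin m) :
    (completeSplitGraph n m).neighborFinset (Sum.inr j) =
      Finset.univ.map Function.Embedding.inl := by
  ext v
  rw [SimpleGraph.mem_neighborFinset]
  cases v <;> simp [completeSplitGraph]

theorem adjMatrix_mulVec_inl (x : Fin n ⊕ Fin m → ℝ) (i : Fin n) :
    ((completeSplitGraph n m).adjMatrix ℝ *ᵥ x) (Sum.inl i) = ∑ v, x v - x (Sum.inl i) := by
  rw [SimpleGraph.adjMatrix_mulVec_apply, neighborFinset_inl, eq_sub_iff_add_eq,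
    Finset.sum_erase_add _ _ (Finset.mem_univ _)]

theorem adjMatrix_mulVec_inr (x : Fin n ⊕ Fin m → ℝ) (j : Fin m) :
    ((completeSplitGraph n m).adjMatrix ℝ *ᵥ x) (Sum.inr j) = ∑ i, x (Sum.inl i) := by
  rw [SimpleGraph.adjMatrix_mulVec_apply, neighborFinset_inr, Finset.sum_map]
  rfl

variable {x : Fin n ⊕ Fin m → ℝ} {lam : ℝ}

theorem pos_eigenvector_eq_sumElim (hx : ∀ v, 0 < x v)
    (h : (completeSplitGraph n m).adjMatrix ℝ *ᵥ x = lam • x) (i₀ : Fin n) (j₀ : Fin m) :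
    x = Sum.elim (fun _ => x (Sum.inl i₀)) (fun _ => x (Sum.inr j₀)) := by
  have hinl (i : Fin n) : (lam + 1) * x (Sum.inl i) = ∑ v, x v := by
    have := congrFun h (Sum.inl i)
    rw [adjMatrix_mulVec_inl, Pi.smul_apply, smul_eq_mul] at this
    linear_combination -this
  have hinr (j : Fin m) : lam * x (Sum.inr j) = ∑ i, x (Sum.inl i) := by
    have := congrFun h (Sum.inr j)
    rw [adjMatrix_mulVec_inr] at this
    rw [this, Pi.smul_apply, smul_eq_mul]
  have hsum : 0 < ∑ i, x (Sum.inl i) :=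
    Finset.sum_pos (fun i _ => hx _) ⟨i₀, Finset.mem_univ _⟩
  have hlam : 0 < lam := pos_of_mul_pos_left ((hinr j₀).symm ▸ hsum) (hx _).le
  ext (i | j)
  · exact mul_left_cancel₀ (by positivity) ((hinl i).trans (hinl i₀).symm)
  · exact mul_left_cancel₀ hlam.ne' ((hinr j).trans (hinr j₀).symm)

theorem quadratic_of_sumElim_eigenvector {a b : ℝ}
    (h : (completeSplitGraph n m).adjMatrix ℝ *ᵥ Sum.elim (fun _ => a) (fun _ => b) =
      lam • Sum.elim (fun _ => a) (fun _ => b)) (i : Fin n) (j : Fin m) :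
    m * b ^ 2 + (n - 1) * a * b = n * a ^ 2 := by
  have hinl := congrFun h (Sum.inl i)
  have hinr := congrFun h (Sum.inr j)
  rw [adjMatrix_mulVec_inl, Fintype.sum_sum_type] at hinl
  rw [adjMatrix_mulVec_inr] at hinr
  simp only [Sum.elim_inl, Sum.elim_inr, Pi.smul_apply, smul_eq_mul, Finset.sum_const,
    Finset.card_univ, Fintype.card_fin, nsmul_eq_mul] at hinl hinr
  linear_combination b * hinl - a * hinr

end completeSplitGraph

theorem cv2_pos_eigenvector_completeSplitGraph_mul {k n : ℕ} (hk : 0 < k) (hn : 0 < n)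
    {x : Fin n ⊕ Fin (k * n) → ℝ} {lam : ℝ} (hx : ∀ v, 0 < x v)
    (h : (completeSplitGraph n (k * n)).adjMatrix ℝ *ᵥ x = lam • x) :
    cv2 x = k * (1 - positiveRoot k (1 - 1 / n)) ^ 2 /
      (1 + k * positiveRoot k (1 - 1 / n)) ^ 2 := by
  let i₀ : Fin n := ⟨0, hn⟩
  let j₀ : Fin (k * n) := ⟨0, Nat.mul_pos hk hn⟩
  obtain ⟨a, b, rfl⟩ : ∃ a b, x = Sum.elim (fun _ => a) (fun _ => b) :=
    ⟨_, _, completeSplitGraph.pos_eigenvector_eq_sumElim hx h i₀ j₀⟩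
  have ha : 0 < a := hx (Sum.inl i₀)
  have hb : 0 < b := hx (Sum.inr j₀)
  have hrel := completeSplitGraph.quadratic_of_sumElim_eigenvector h i₀ j₀
  have hroot : b / a = positiveRoot k (1 - 1 / n) := by
    refine eq_positiveRoot (by positivity) (by positivity) ?_
    push_cast at hrel
    field_simp
    linear_combination hrel
  rw [cv2_sumElim_const, ← hroot]
  push_cast
  field_simp

/-- Fix `k ≥ 1`.  If `xₙ` is an entrywise-positive adjacency eigenvector of the
complete split graph `S(n, kn)`, then
`c(xₙ) → k·((√(4k+1) − 1)/k − 2)² / (√(4k+1) + 1)²` as `n → ∞`. -/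
theorem stmt10 (k : ℕ) (hk : 1 ≤ k)
    (x : (n : ℕ) → (Fin n ⊕ Fin (k * n)) → ℝ) (lam : ℕ → ℝ)
    (hx : ∀ n, 2 ≤ n → ∀ v, 0 < x n v)
    (heig : ∀ n, 2 ≤ n →
      (completeSplitGraph n (k * n)).adjMatrix ℝ *ᵥ x n = lam n • x n) :
    Tendsto (fun n => cv2 (x n)) atTop
      (𝓝 ((k : ℝ) * ((Real.sqrt (4 * k + 1) - 1) / k - 2) ^ 2 /
        (Real.sqrt (4 * k + 1) + 1) ^ 2)) := by
  have hk₀ : (0 : ℝ) < k := by exact_mod_cast hk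
  set g : ℝ → ℝ := fun r => k * (1 - r) ^ 2 / (1 + k * r) ^ 2
  have hroot :
      Tendsto (fun n : ℕ => positiveRoot k (1 - 1 / n)) atTop (𝓝 (positiveRoot k 1)) :=
    ((continuous_positiveRoot k).tendsto 1).comp
      (by simpa using tendsto_one_div_atTop_nhds_zero_nat.const_sub (1 : ℝ))
  have hg : ContinuousAt g (positiveRoot k 1) := by
    have := positiveRoot_pos hk₀ 1
    exact ContinuousAt.div (by fun_prop) (by fun_prop) (by positivity)
  have hval : g (positiveRoot k 1) = k * ((Real.sqrt (4 * k + 1) - 1) / k - 2) ^ 2 /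
      (Real.sqrt (4 * k + 1) + 1) ^ 2 := by
    set s := Real.sqrt (4 * k + 1)
    have hroot₁ : positiveRoot k 1 = (s - 1) / (2 * k) := by
      rw [positiveRoot, one_pow, add_comm]
    have hden : 1 + k * ((s - 1) / (2 * k)) = (s + 1) / 2 := by
      field_simp
      ring
    have hs : s + 1 ≠ 0 := by positivity
    simp only [g, hroot₁, hden]
    field_simp
    ring
  rw [← hval]
  refine (hg.tendsto.comp hroot).congr' ?_
  filter_upwards [eventually_ge_atTop 2] with n hn
  exact (cv2_pos_eigenvector_completeSplitGraph_mul hk (by omega) (hx n hn) (heig n hn)).symm
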